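/- Let n ≥ 1, 1/2 < γ < 1, 0 ≤ p₁ ≤ … ≤ p_n, R ≥ 1 and L ≥ 1, and set α_i = (1+p_i/2)/(1+γp_i/2) and β_i = (1/2)/(1+p_i/2). Let a ∈ ℝⁿ with a ≠ 0 and |a|_α ≤ R, and define z_i = sgn(a_i) L^{β_i} |a_i|^{2α_i−1} / |a|_α^{2−γ}. Then for every i (with the convention 0⁰ = 1), |z_i|^{p_i/2} · ( 1 + L^{β_i} |a_i|^{α_i−1} / |a|_α^{1−γ/2} ) ≤ C · L^{1/2} / |a|_α^{1−γ/2}, where C depends only on n, γ, p_n and R. -/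

import Mathlib

noncomputable section
open Real Finset

/-- The anisotropic distance `|z|_α = ( Σ_i (1/α_i)|z_i|^{2α_i} )^{1/2}`. -/
def anorm {n : ℕ} (α : Fin n → ℝ) (z : EuclideanSpace ℝ (Fin n)) : ℝ :=
  Real.sqrt (∑ i, (1 / α i) * |z i| ^ (2 * α i))

/-- `α = (1+p/2)/(1+γp/2)`. -/
def αe (γ p : ℝ) : ℝ := (1 + p / 2) / (1 + γ * p / 2)

/-- `β = (1/2)/(1+p/2)`. -/
def βe (p : ℝ) : ℝ := (1 / 2) / (1 + p / 2)

lemma aux_α_ge_one {γ p : ℝ} (hγ0 : 0 < γ) (hγ1 : γ ≤ 1) (hp : 0 ≤ p) :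
    1 ≤ αe γ p := by
  rw [αe, le_div_iff₀ (by nlinarith)]
  nlinarith

lemma aux_α_le_two {γ p : ℝ} (hγ0 : 1/2 ≤ γ) (hγp : 0 < γ) (hp : 0 ≤ p) :
    αe γ p ≤ 2 := by
  rw [αe, div_le_iff₀ (by nlinarith)]
  nlinarith

lemma aux_α_id {γ p : ℝ} (hγ0 : 0 < γ) (hp : 0 ≤ p) :
    αe γ p * (1 + γ * p / 2) = 1 + p / 2 := by
  rw [αe, div_mul_cancel₀]
  nlinarith

lemma aux_β_id {p : ℝ} (hp : 0 ≤ p) :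
    βe p * (1 + p / 2) = 1 / 2 := by
  rw [βe, div_mul_cancel₀]
  nlinarith

lemma aux_β_nonneg {p : ℝ} (hp : 0 ≤ p) : 0 ≤ βe p := by
  rw [βe]; positivity

lemma aux_inv {γ p : ℝ} (hγ0 : 0 < γ) (hp : 0 ≤ p) :
    p / (2 * αe γ p) = p * (2 + γ * p) / (2 * (2 + p)) := by
  have h1 : (0:ℝ) < 1 + γ * p / 2 := by nlinarith
  have h2 : (0:ℝ) < 1 + p / 2 := by nlinarith
  rw [αe]
  field_simp

set_option maxHeartbeats 2000000 in
/-- **Balancedness estimate.** With `α_i = (1+p_i/2)/(1+γp_i/2)`, `β_i = (1/2)/(1+p_i/2)`,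
`R ≥ 1`, `L ≥ 1`, `0 ≠ a` with `|a|_α ≤ R`, and
`z_i = sgn(a_i) L^{β_i}|a_i|^{2α_i−1}/|a|_α^{2−γ}`, one has for every `i`
`|z_i|^{p_i/2}(1 + L^{β_i}|a_i|^{α_i−1}/|a|_α^{1−γ/2}) ≤ C·L^{1/2}/|a|_α^{1−γ/2}`,
where `C` depends only on `n, γ, p_n, R`. -/
theorem balanced_gradient_estimate (n : ℕ) (hn : 1 ≤ n) (γ pn R : ℝ)
    (hγ0 : 1 / 2 < γ) (hγ1 : γ < 1) (hR : 1 ≤ R) :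
    ∃ C > (0 : ℝ),
      ∀ p : Fin n → ℝ, (∀ i, 0 ≤ p i) → Monotone p → p ⟨n - 1, by omega⟩ = pn →
      ∀ L : ℝ, 1 ≤ L →
      ∀ a : EuclideanSpace ℝ (Fin n), a ≠ 0 → anorm (fun i => αe γ (p i)) a ≤ R →
      ∀ i, |Real.sign (a i) * L ^ βe (p i) * |a i| ^ (2 * αe γ (p i) - 1) /
              (anorm (fun i => αe γ (p i)) a) ^ (2 - γ)| ^ (p i / 2) *
          (1 + L ^ βe (p i) * |a i| ^ (αe γ (p i) - 1) /
            (anorm (fun i => αe γ (p i)) a) ^ (1 - γ / 2)) ≤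
        C * L ^ (1 / 2 : ℝ) / (anorm (fun i => αe γ (p i)) a) ^ (1 - γ / 2) := by
  have hγp : (0:ℝ) < γ := by linarith
  set q : ℝ := max pn 0 with hqdef
  have hq0 : (0:ℝ) ≤ q := le_max_right _ _
  have hs2 : (1:ℝ) ≤ Real.sqrt 2 := by
    nlinarith [Real.sq_sqrt (by norm_num : (0:ℝ) ≤ 2), Real.sqrt_nonneg 2]
  have hs2q : (0:ℝ) < Real.sqrt 2 ^ q := Real.rpow_pos_of_pos (by linarith) q
  have hs2q1 : (1:ℝ) ≤ Real.sqrt 2 ^ q := Real.one_le_rpow hs2 hq0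
  refine ⟨(Real.sqrt 2 ^ q + 1) * (R + 1), by positivity, ?_⟩
  intro p hp hmono hpn L hL a ha hanorm i
  have hL0 : (0:ℝ) < L := by linarith
  have hα1 : ∀ j, 1 ≤ αe γ (p j) := fun j => aux_α_ge_one hγp hγ1.le (hp j)
  have hα2 : ∀ j, αe γ (p j) ≤ 2 := fun j => aux_α_le_two hγ0.le hγp (hp j)
  set A : ℝ := anorm (fun i => αe γ (p i)) a with hAdef
  have hSnn : 0 ≤ ∑ j, (1 / αe γ (p j)) * |a j| ^ (2 * αe γ (p j)) :=
    Finset.sum_nonneg fun j _ =>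
      mul_nonneg (by have := hα1 j; positivity) (Real.rpow_nonneg (abs_nonneg _) _)
  have hA2 : A ^ 2 = ∑ j, (1 / αe γ (p j)) * |a j| ^ (2 * αe γ (p j)) := by
    rw [hAdef, anorm, Real.sq_sqrt hSnn]
  obtain ⟨j₀, hj₀⟩ : ∃ j, a j ≠ 0 := by
    by_contra h
    push_neg at h
    exact ha (by ext j; simpa using h j)
  have hApos : 0 < A := by
    rw [hAdef, anorm]
    apply Real.sqrt_pos.mpr
    refine Finset.sum_pos' (fun j _ =>
      mul_nonneg (by have := hα1 j; positivity) (Real.rpow_nonneg (abs_nonneg _) _))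
      ⟨j₀, Finset.mem_univ _, ?_⟩
    have h1 : (0:ℝ) < |a j₀| := abs_pos.mpr hj₀
    have := hα1 j₀
    positivity
  have hAR : A ≤ R := hanorm
  clear_value A
  have hpi_pn : p i ≤ q := by
    have h1 : i ≤ (⟨n - 1, by omega⟩ : Fin n) := by
      have := i.isLt
      rw [Fin.le_def]
      simp only []
      omega
    have h2 := hmono h1
    rw [hpn] at h2
    rw [hqdef]
    exact h2.trans (le_max_left _ _)
  set P : ℝ := p i with hPdef
  have hP0 : (0:ℝ) ≤ P := hp i
  set αi : ℝ := αe γ (p i) with hαidef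
  set βi : ℝ := βe (p i) with hβidef
  have hαi1 : 1 ≤ αi := hα1 i
  have hαi2 : αi ≤ 2 := hα2 i
  have hαid : αi * (1 + γ * P / 2) = 1 + P / 2 := by
    rw [hαidef, hPdef]; exact aux_α_id hγp (hp i)
  have hβid : βi * (1 + P / 2) = 1 / 2 := by
    rw [hβidef, hPdef]; exact aux_β_id (hp i)
  have hβ0 : 0 ≤ βi := by rw [hβidef]; exact aux_β_nonneg (hp i)
  have hinv : P / (2 * αi) = P * (2 + γ * P) / (2 * (2 + P)) := by
    rw [hαidef, hPdef]; exact aux_inv hγp (hp i)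
  have hkey : |a i| ^ (2 * αi) ≤ αi * A ^ 2 := by
    have h1 : (1 / αi) * |a i| ^ (2 * αi) ≤ A ^ 2 := by
      rw [hA2, hαidef]
      exact Finset.single_le_sum (f := fun j => (1 / αe γ (p j)) * |a j| ^ (2 * αe γ (p j)))
        (fun j _ => mul_nonneg (by have := hα1 j; positivity) (Real.rpow_nonneg (abs_nonneg _) _))
        (Finset.mem_univ i)
    have hαpos : (0:ℝ) < αi := by linarith
    calc |a i| ^ (2 * αi) = αi * ((1 / αi) * |a i| ^ (2 * αi)) := by field_simp
      _ ≤ αi * A ^ 2 := mul_le_mul_of_nonneg_left h1 hαpos.le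
  clear_value P αi βi
  clear hpn hmono hp hA2 hSnn hAdef ha hanorm hj₀ hα1 hα2
  -- positivity of RHS pieces
  have hA12 : (0:ℝ) < A ^ (1 - γ / 2) := Real.rpow_pos_of_pos hApos _
  have hL12 : (0:ℝ) < L ^ (1/2 : ℝ) := Real.rpow_pos_of_pos hL0 _
  have hL12' : (1:ℝ) ≤ L ^ (1/2 : ℝ) := Real.one_le_rpow hL (by norm_num)
  have hAR' : A ^ (1 - γ / 2) ≤ R := by
    calc A ^ (1 - γ/2) ≤ R ^ (1 - γ/2) :=
          Real.rpow_le_rpow hApos.le hAR (by linarith)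
      _ ≤ R ^ (1:ℝ) := Real.rpow_le_rpow_of_exponent_le hR (by linarith)
      _ = R := Real.rpow_one R
  by_cases hai : a i = 0
  · -- degenerate case
    rw [hai]
    simp only [Real.sign_zero, zero_mul, zero_div, abs_zero]
    rcases eq_or_lt_of_le hP0 with hPz | hPz
    · -- P = 0
      rw [← hPz] at hαid hβid
      norm_num at hαid hβid
      rw [← hPz, hαid, hβid]
      norm_num
      have h2 : R ≤ R * L ^ (1/2:ℝ) := le_mul_of_one_le_right (by linarith only [hR]) hL12'
      have e1 : A ^ (1 - γ/2) + L ^ (1/2:ℝ) ≤ (R + 1) * L ^ (1/2:ℝ) := by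
        have h4 : (R + 1) * L ^ (1/2:ℝ) = R * L ^ (1/2:ℝ) + L ^ (1/2:ℝ) := by ring
        linarith only [hAR', h2, h4]
      have e2 : (R + 1) * L ^ (1/2:ℝ) ≤ (Real.sqrt 2 ^ q + 1) * (R + 1) * L ^ (1/2:ℝ) := by
        apply mul_le_mul_of_nonneg_right _ hL12.le
        exact le_mul_of_one_le_left (by linarith only [hR]) (by linarith only [hs2q1])
      calc 1 + L ^ (1/2:ℝ) / A ^ (1 - γ/2)
          = (A ^ (1 - γ/2) + L ^ (1/2:ℝ)) / A ^ (1 - γ/2) := by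
            rw [add_div, div_self (ne_of_gt hA12)]
        _ ≤ (Real.sqrt 2 ^ q + 1) * (R + 1) * L ^ (1/2:ℝ) / A ^ (1 - γ/2) := by
            gcongr
            exact e1.trans e2
    · -- P > 0
      rw [Real.zero_rpow (ne_of_gt (by linarith : (0:ℝ) < P / 2)), zero_mul]
      positivity
  · -- main case
    have hb : (0:ℝ) < |a i| := abs_pos.mpr hai
    set b : ℝ := |a i| with hbdef
    clear_value b
    have hsgn : |Real.sign (a i)| = 1 := by
      rcases lt_or_gt_of_ne hai with h | h
      · rw [Real.sign_of_neg h]; norm_num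
      · rw [Real.sign_of_pos h]; norm_num
    have hZ : |Real.sign (a i) * L ^ βi * b ^ (2 * αi - 1) / A ^ (2 - γ)| =
        L ^ βi * b ^ (2 * αi - 1) / A ^ (2 - γ) := by
      rw [abs_div, abs_mul, abs_mul, hsgn, one_mul,
        abs_of_pos (Real.rpow_pos_of_pos hL0 _), abs_of_pos (Real.rpow_pos_of_pos hb _),
        abs_of_pos (Real.rpow_pos_of_pos hApos _)]
    rw [hZ]
    set t : ℝ := b ^ αi / A with htdef
    have ht0 : 0 < t := div_pos (Real.rpow_pos_of_pos hb _) hApos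
    clear_value t
    have ht2 : t ≤ Real.sqrt 2 := by
      have hsq : t ^ 2 = b ^ (2 * αi) / A ^ 2 := by
        rw [htdef, div_pow, ← Real.rpow_natCast (b ^ αi) 2, ← Real.rpow_mul hb.le]
        norm_num
        rw [mul_comm]
      have h2 : t ^ 2 ≤ 2 := by
        rw [hsq, div_le_iff₀ (by positivity)]
        calc b ^ (2 * αi) ≤ αi * A ^ 2 := hkey
          _ ≤ 2 * A ^ 2 := mul_le_mul_of_nonneg_right hαi2 (sq_nonneg A)
      have hs22 : Real.sqrt 2 ^ 2 = 2 := Real.sq_sqrt (by norm_num)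
      by_contra hcon
      push_neg at hcon
      have : Real.sqrt 2 ^ 2 < t ^ 2 := by
        apply pow_lt_pow_left₀ hcon (Real.sqrt_nonneg 2)
        norm_num
      rw [hs22] at this
      linarith only [this, h2]
    set E1 : ℝ := P - P / (2 * αi) with hE1def
    set E2 : ℝ := P * (1 - γ / 2) with hE2def
    set D : ℝ := (γ * P + 4 - 2 * γ) / (2 * (2 + P)) with hDdef
    clear_value E1 E2 D
    have hE1nn : 0 ≤ E1 := by
      rw [hE1def]
      have : P / (2 * αi) ≤ P := div_le_self hP0 (by linarith)
      linarith
    have hE1q : E1 ≤ q := by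
      rw [hE1def]
      have : 0 ≤ P / (2 * αi) := by positivity
      linarith
    have hγP : γ * P ≤ P := by
      have h := mul_le_of_le_one_left hP0 hγ1.le
      linarith only [h]
    have hγPnn : 0 ≤ γ * P := mul_nonneg hγp.le hP0
    have hE2nn : 0 ≤ E2 := by
      rw [hE2def]; exact mul_nonneg hP0 (by linarith only [hγ1, hγ0])
    have hE2q : E2 ≤ q := by
      rw [hE2def]
      have h := mul_le_of_le_one_right hP0 (by linarith only [hγ0] : 1 - γ/2 ≤ 1)
      linarith only [h, hpi_pn]
    have hD0 : 0 ≤ D := by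
      rw [hDdef]
      apply div_nonneg (by linarith only [hγPnn, hγ1]) (by linarith only [hP0])
    have hD1 : D ≤ 1 := by
      rw [hDdef, div_le_one (by linarith only [hP0])]
      linarith only [hγP, hγp, hP0]
    have hβP : βi * (P / 2) ≤ 1 / 2 := by
      have h : βi * (1 + P/2) = βi + βi * (P/2) := by ring
      linarith only [hβid, hβ0, h]
    have hαne : αi ≠ 0 := by positivity
    have hmul : ∀ u1 v1 w1 u2 v2 w2 : ℝ,
        (L ^ u1 * b ^ v1 / A ^ w1) * (L ^ u2 * b ^ v2 / A ^ w2) =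
          L ^ (u1 + u2) * b ^ (v1 + v2) / A ^ (w1 + w2) := by
      intro u1 v1 w1 u2 v2 w2
      rw [Real.rpow_add hL0, Real.rpow_add hb, Real.rpow_add hApos]
      field_simp
    have hLHS1 : (L ^ βi * b ^ (2 * αi - 1) / A ^ (2 - γ)) ^ (P / 2) =
        L ^ (βi * (P / 2)) * b ^ ((2 * αi - 1) * (P / 2)) / A ^ ((2 - γ) * (P / 2)) := by
      rw [Real.div_rpow (by positivity) (by positivity),
        Real.mul_rpow (by positivity) (by positivity),
        ← Real.rpow_mul hL0.le, ← Real.rpow_mul hb.le, ← Real.rpow_mul hApos.le]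
    have claim1 : (L ^ βi * b ^ (2 * αi - 1) / A ^ (2 - γ)) ^ (P / 2) =
        L ^ (βi * (P / 2)) * (t ^ E1 * A ^ D) / A ^ (1 - γ / 2) := by
      have ht1 : t ^ E1 = b ^ (αi * E1) / A ^ E1 := by
        rw [htdef, Real.div_rpow (by positivity) hApos.le, ← Real.rpow_mul hb.le]
      have hbexp : (2 * αi - 1) * (P / 2) = αi * E1 := by
        rw [hE1def]
        field_simp
      have hAexp : (2 - γ) * (P / 2) = E1 + (1 - γ / 2) - D := by
        have h2P : (2:ℝ) + P ≠ 0 := by positivity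
        rw [hE1def, hDdef, hinv]
        field_simp
        ring
      rw [hLHS1, ht1, hbexp, hAexp, Real.rpow_sub hApos, Real.rpow_add hApos]
      field_simp
    have claim2 : (L ^ βi * b ^ (2 * αi - 1) / A ^ (2 - γ)) ^ (P / 2) *
        (L ^ βi * b ^ (αi - 1) / A ^ (1 - γ / 2)) =
        L ^ (1/2 : ℝ) * t ^ E2 / A ^ (1 - γ / 2) := by
      have ht1 : t ^ E2 = b ^ (αi * E2) / A ^ E2 := by
        rw [htdef, Real.div_rpow (by positivity) hApos.le, ← Real.rpow_mul hb.le]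
      rw [hLHS1, hmul, ht1]
      have hLexp : βi * (P / 2) + βi = 1/2 := by
        have h : βi * (1 + P/2) = βi + βi * (P/2) := by ring
        linarith only [hβid, h]
      have hbexp : (2 * αi - 1) * (P / 2) + (αi - 1) = αi * E2 := by
        rw [hE2def]; linear_combination hαid
      have hAexp : (2 - γ) * (P / 2) + (1 - γ / 2) = E2 + (1 - γ / 2) := by
        rw [hE2def]; ring
      rw [hLexp, hbexp, hAexp, Real.rpow_add hApos]
      field_simp
    rw [mul_add, mul_one, claim2, claim1]
    have bound1 : L ^ (βi * (P / 2)) * (t ^ E1 * A ^ D) ≤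
        L ^ (1/2 : ℝ) * (Real.sqrt 2 ^ q * R) := by
      have b1 : L ^ (βi * (P / 2)) ≤ L ^ (1/2 : ℝ) :=
        Real.rpow_le_rpow_of_exponent_le hL hβP
      have b2 : t ^ E1 ≤ Real.sqrt 2 ^ q := by
        calc t ^ E1 ≤ Real.sqrt 2 ^ E1 := Real.rpow_le_rpow ht0.le ht2 hE1nn
          _ ≤ Real.sqrt 2 ^ q := Real.rpow_le_rpow_of_exponent_le hs2 hE1q
      have b3 : A ^ D ≤ R := by
        calc A ^ D ≤ R ^ D := Real.rpow_le_rpow hApos.le hAR hD0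
          _ ≤ R ^ (1:ℝ) := Real.rpow_le_rpow_of_exponent_le hR hD1
          _ = R := Real.rpow_one R
      have h1 : 0 ≤ t ^ E1 := (Real.rpow_pos_of_pos ht0 _).le
      have h2 : 0 ≤ A ^ D := (Real.rpow_pos_of_pos hApos _).le
      have h3 : 0 ≤ L ^ (βi * (P/2)) := (Real.rpow_pos_of_pos hL0 _).le
      exact mul_le_mul b1 (mul_le_mul b2 b3 h2 hs2q.le)
        (mul_nonneg h1 h2) hL12.le
    have bound2 : L ^ (1/2 : ℝ) * t ^ E2 ≤ L ^ (1/2 : ℝ) * Real.sqrt 2 ^ q := by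
      have b2 : t ^ E2 ≤ Real.sqrt 2 ^ q := by
        calc t ^ E2 ≤ Real.sqrt 2 ^ E2 := Real.rpow_le_rpow ht0.le ht2 hE2nn
          _ ≤ Real.sqrt 2 ^ q := Real.rpow_le_rpow_of_exponent_le hs2 hE2q
      exact mul_le_mul_of_nonneg_left b2 hL12.le
    calc L ^ (βi * (P / 2)) * (t ^ E1 * A ^ D) / A ^ (1 - γ / 2) +
          L ^ (1/2 : ℝ) * t ^ E2 / A ^ (1 - γ / 2)
        ≤ L ^ (1/2 : ℝ) * (Real.sqrt 2 ^ q * R) / A ^ (1 - γ / 2) +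
          L ^ (1/2 : ℝ) * Real.sqrt 2 ^ q / A ^ (1 - γ / 2) := by
          gcongr
      _ ≤ (Real.sqrt 2 ^ q + 1) * (R + 1) * L ^ (1/2 : ℝ) / A ^ (1 - γ / 2) := by
          rw [← add_div]
          gcongr ?_ / _
          calc L ^ (1/2:ℝ) * (Real.sqrt 2 ^ q * R) + L ^ (1/2:ℝ) * Real.sqrt 2 ^ q
              = (Real.sqrt 2 ^ q * (R + 1)) * L ^ (1/2:ℝ) := by ring
            _ ≤ ((Real.sqrt 2 ^ q + 1) * (R + 1)) * L ^ (1/2:ℝ) := by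
                apply mul_le_mul_of_nonneg_right _ hL12.le
                apply mul_le_mul_of_nonneg_right _ (by linarith only [hR])
                linarith only []
            _ = (Real.sqrt 2 ^ q + 1) * (R + 1) * L ^ (1/2:ℝ) := by ring
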